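/- arXiv:1510.05193 — 3 statements merged into one kernel-verified Lean document; each statement's English description precedes it below -/
import Mathlib

section
/- Existence part of the wellposedness theorem for the limiting transport equation: the family of finite Borel measures μ_t(A) = α ∫₀^t 1_A(e + q s) ds on ℝ² (t ≥ 0), i.e. μ_t = α ∫₀^t δ_{e+qs} ds, satisfies the weak transport equation: for every continuously differentiable f : ℝ × ℝ² → ℝ with compact support contained in (0,∞) × ℝ², ∫₀^∞ ∫_{ℝ²} ∂_t f(t,x) μ_t(dx) dt + ∫₀^∞ ∫_{ℝ²} q · ∇_x f(t,x) μ_t(dx) dt + α ∫₀^∞ f(t,e) dt = 0. Moreover t ↦ μ_t is continuous in the topology of weak convergence of finite measures and μ_0 = 0. -/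
/-!
Pulling the space integrals back along `s ↦ e + s • q` turns them into integrals over
`s ∈ (0, t]` of partial derivatives of `h t s := f (t, e + s • q)`. The transport term integrates `∂ₛ h` and gives
`α (h t t - h t 0)`; the time term integrates `∂ₜ h` over the triangle `0 < s ≤ t`, and after
Fubini the inner `t`-integral over `[s, ∞)` gives `-α h s s`. The diagonal terms cancel and
`-α h t 0 = -α f (t, e)` cancels the source term.
-/

open MeasureTheory Filter
open scoped ENNReal NNReal

/-- The candidate solution of the transport equation:
`μ_t(A) = α ∫₀^t 1_A(e + q s) ds`, i.e. `μ_t = α ∫₀^t δ_{e+qs} ds`. -/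
noncomputable def transportSol (q e : ℝ × ℝ) (α : ℝ) (t : ℝ) : Measure (ℝ × ℝ) :=
  ENNReal.ofReal α • Measure.map (fun s : ℝ => e + s • q) (volume.restrict (Set.Ioc 0 t))

open Set Function Topology

theorem deriv_comp_prodMk_left {𝕜 E F : Type*} [NontriviallyNormedField 𝕜]
    [NormedAddCommGroup E] [NormedSpace 𝕜 E] [NormedAddCommGroup F] [NormedSpace 𝕜 F]
    {f : 𝕜 × E → F} {t : 𝕜} {x : E} (hf : DifferentiableAt 𝕜 f (t, x)) :
    deriv (fun u => f (u, x)) t = fderiv 𝕜 f (t, x) (1, 0) :=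
  (hf.hasFDerivAt.comp_hasDerivAt t ((hasDerivAt_id t).prodMk (hasDerivAt_const t x))).deriv

theorem HasCompactSupport.comp_graph {X Y M : Type*} [TopologicalSpace X] [R1Space X]
    [TopologicalSpace Y] [Zero M] {f : X × Y → M} (hf : HasCompactSupport f) (g : X → Y) :
    HasCompactSupport fun x => f (x, g x) :=
  HasCompactSupport.intro (hf.image continuous_fst) fun _ hx =>
    image_eq_zero_of_notMem_tsupport fun h => hx ⟨_, h, rfl⟩

theorem measurableSet_lt_snd_le_fst :
    MeasurableSet {p : ℝ × ℝ | 0 < p.2 ∧ p.2 ≤ p.1} :=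
  (measurableSet_lt measurable_const measurable_snd).inter
    (measurableSet_le measurable_snd measurable_fst)

theorem integral_Ioi_integral_Ioc_eq_integral_Ioi_integral_Ici {G : ℝ → ℝ → ℝ}
    (hG : IntegrableOn (uncurry G) {p : ℝ × ℝ | 0 < p.2 ∧ p.2 ≤ p.1}) :
    ∫ t in Ioi 0, ∫ s in Ioc 0 t, G t s = ∫ s in Ioi 0, ∫ t in Ici s, G t s := by
  set T := {p : ℝ × ℝ | 0 < p.2 ∧ p.2 ≤ p.1}
  have hF : Integrable (T.indicator (uncurry G)) (volume.prod volume) :=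
    (integrable_indicator_iff measurableSet_lt_snd_le_fst).2 hG
  have hslice_t : ∀ t, ∫ s, T.indicator (uncurry G) (t, s) = ∫ s in Ioc 0 t, G t s := by
    intro t
    rw [← integral_indicator measurableSet_Ioc]
    simp [T, indicator_apply]
  have hslice_s : ∀ s, ∫ t, T.indicator (uncurry G) (t, s) =
      (Ioi 0).indicator (fun s => ∫ t in Ici s, G t s) s := by
    intro s
    by_cases hs : 0 < s
    · rw [indicator_of_mem (show s ∈ Ioi 0 from hs), ← integral_indicator measurableSet_Ici]
      congr 1 with t
      simp [T, indicator_apply, hs]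
    · simp [T, hs]
  calc ∫ t in Ioi 0, ∫ s in Ioc 0 t, G t s = ∫ t, ∫ s in Ioc 0 t, G t s :=
        setIntegral_eq_integral_of_forall_compl_eq_zero fun t ht => by
          simp [Ioc_eq_empty (show ¬ 0 < t from ht)]
    _ = ∫ t, ∫ s, T.indicator (uncurry G) (t, s) := by simp_rw [hslice_t]
    _ = ∫ s, ∫ t, T.indicator (uncurry G) (t, s) := integral_integral_swap hF
    _ = ∫ s in Ioi 0, ∫ t in Ici s, G t s := by
        simp_rw [hslice_s]; exact integral_indicator measurableSet_Ioi

theorem integral_Ioi_integral_Ioc_of_hasDerivAt_fst {h h' : ℝ → ℝ → ℝ} {R : ℝ}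
    (hderiv : ∀ t s, HasDerivAt (h · s) (h' t s) t) (hcont : Continuous (uncurry h'))
    (hvanish : ∀ t s, R < t → h t s = 0) :
    ∫ t in Ioi 0, ∫ s in Ioc 0 t, h' t s = -∫ s in Ioi 0, h s s := by
  have hvanish' : ∀ t s, R < t → h' t s = 0 := fun t s ht => by
    have : (h · s) =ᶠ[𝓝 t] fun _ => 0 := (eventually_gt_nhds ht).mono fun u hu => hvanish u s hu
    rw [← (hderiv t s).deriv, this.deriv_eq, deriv_const]
  have hint : IntegrableOn (uncurry h') {p : ℝ × ℝ | 0 < p.2 ∧ p.2 ≤ p.1} :=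
    (hcont.continuousOn.integrableOn_compact (isCompact_Icc.prod isCompact_Icc :
      IsCompact (Icc (0 : ℝ) R ×ˢ Icc (0 : ℝ) R))).of_forall_sdiff_eq_zero
      measurableSet_lt_snd_le_fst fun p ⟨⟨hs, hst⟩, hbox⟩ => hvanish' p.1 p.2 <| by
        by_contra! hR
        exact hbox ⟨⟨hs.le.trans hst, hR⟩, ⟨hs.le, hst.trans hR⟩⟩
  rw [integral_Ioi_integral_Ioc_eq_integral_Ioi_integral_Ici hint, ← integral_neg]
  refine setIntegral_congr_fun measurableSet_Ioi fun s _ => ?_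
  have hint_s : IntegrableOn (h' · s) (Ioi s) :=
    ((hcont.comp (continuous_id.prodMk continuous_const)).integrableOn_Icc
      (a := s) (b := R)).of_forall_sdiff_eq_zero measurableSet_Ioi fun t ⟨hst, ht⟩ =>
        hvanish' t s <| by by_contra! hR; exact ht ⟨le_of_lt hst, hR⟩
  have hlim : Tendsto (h · s) atTop (𝓝 0) :=
    tendsto_const_nhds.congr' <| (eventually_gt_atTop R).mono fun t ht => (hvanish t s ht).symm
  rw [integral_Ici_eq_integral_Ioi,
    integral_Ioi_of_hasDerivAt_of_tendsto' (fun t _ => hderiv t s) hint_s hlim, zero_sub]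

section transportSol

variable {q e : ℝ × ℝ} {α : ℝ}

instance isFiniteMeasure_transportSol (t : ℝ) : IsFiniteMeasure (transportSol q e α t) :=
  Measure.smul_finite _ ENNReal.ofReal_ne_top

theorem transportSol_zero : transportSol q e α 0 = 0 := by
  simp [transportSol]

theorem integral_transportSol (hα : 0 ≤ α) {g : ℝ × ℝ → ℝ} (hg : Continuous g) (t : ℝ) :
    ∫ x, g x ∂transportSol q e α t = α * ∫ s in Ioc 0 t, g (e + s • q) := by
  rw [transportSol, integral_smul_measure, ENNReal.toReal_ofReal hα,
    integral_map (by fun_prop) hg.aestronglyMeasurable, smul_eq_mul]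

theorem continuousOn_integral_transportSol (hα : 0 ≤ α) {g : ℝ × ℝ → ℝ} (hg : Continuous g) :
    ContinuousOn (fun t => ∫ x, g x ∂transportSol q e α t) (Ici 0) := by
  have hprim : Continuous fun t => α * ∫ s in (0 : ℝ)..t, g (e + s • q) :=
    continuous_const.mul (intervalIntegral.continuous_primitive
      (fun _ _ => (hg.comp (by fun_prop)).intervalIntegrable _ _) 0)
  refine hprim.continuousOn.congr fun t (ht : 0 ≤ t) => ?_
  dsimp only
  rw [integral_transportSol hα hg, intervalIntegral.integral_of_le ht]

theorem integral_fderiv_transportSol (hα : 0 ≤ α) {g : ℝ × ℝ → ℝ} (hg : ContDiff ℝ 1 g)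
    {t : ℝ} (ht : 0 ≤ t) :
    ∫ x, fderiv ℝ g x q ∂transportSol q e α t = α * (g (e + t • q) - g e) := by
  have hderiv : ∀ s, HasDerivAt (fun s : ℝ => g (e + s • q)) (fderiv ℝ g (e + s • q) q) s :=
    fun s => by
      have hline : HasDerivAt (fun s : ℝ => e + s • q) q s := by
        simpa using ((hasDerivAt_id s).smul_const q).const_add e
      exact ((hg.differentiable one_ne_zero) _).hasFDerivAt.comp_hasDerivAt s hline
  have hcont : Continuous fun x => fderiv ℝ g x q :=
    (hg.continuous_fderiv one_ne_zero).clm_apply continuous_const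
  rw [integral_transportSol hα hcont, ← intervalIntegral.integral_of_le ht,
    intervalIntegral.integral_eq_sub_of_hasDerivAt (fun s _ => hderiv s)
      ((hcont.comp (by fun_prop)).intervalIntegrable _ _)]
  simp

theorem weak_transport_equation_transportSol (hα : 0 ≤ α) {f : ℝ × (ℝ × ℝ) → ℝ}
    (hf : ContDiff ℝ 1 f) (hcs : HasCompactSupport f) :
    (∫ t in Ioi 0, ∫ x, deriv (fun s => f (s, x)) t ∂transportSol q e α t)
      + (∫ t in Ioi 0, ∫ x, fderiv ℝ (fun y => f (t, y)) x q ∂transportSol q e α t)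
      + α * ∫ t in Ioi 0, f (t, e) = 0 := by
  set φ : ℝ → ℝ × ℝ := fun s => e + s • q
  obtain ⟨R, hR⟩ := (hcs.image continuous_fst).bddAbove
  have hvanish : ∀ t x, R < t → f (t, x) = 0 := fun t x ht =>
    image_eq_zero_of_notMem_tsupport fun h => (hR ⟨_, h, rfl⟩).not_gt ht
  have hdiff : Differentiable ℝ f := hf.differentiable one_ne_zero
  have hpartial : Continuous fun p : ℝ × (ℝ × ℝ) => deriv (fun u => f (u, p.2)) p.1 := by
    simp_rw [deriv_comp_prodMk_left (hdiff _)]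
    exact (hf.continuous_fderiv one_ne_zero).clm_apply continuous_const
  have hint : ∀ g : ℝ → ℝ × ℝ, Continuous g → IntegrableOn (fun t => f (t, g t)) (Ioi 0) :=
    fun g hg => ((hf.continuous.comp (continuous_id.prodMk hg)).integrable_of_hasCompactSupport
      (hcs.comp_graph g)).integrableOn
  have hterm1 : ∫ t in Ioi 0, ∫ x, deriv (fun s => f (s, x)) t ∂transportSol q e α t =
      -(α * ∫ t in Ioi 0, f (t, φ t)) := by
    have hpush : ∀ t, ∫ x, deriv (fun s => f (s, x)) t ∂transportSol q e α t =
        α * ∫ s in Ioc 0 t, deriv (fun u => f (u, φ s)) t := fun t =>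
      integral_transportSol hα (hpartial.comp (continuous_const.prodMk continuous_id)) t
    simp_rw [hpush]
    rw [integral_const_mul, integral_Ioi_integral_Ioc_of_hasDerivAt_fst
      (h := fun t s => f (t, φ s)) (h' := fun t s => deriv (fun u => f (u, φ s)) t)
      (fun t s => (hdiff.comp (differentiable_id.prodMk (differentiable_const _)) t).hasDerivAt)
      (hpartial.comp (continuous_fst.prodMk (by fun_prop)))
      (fun t s => hvanish t (φ s)), mul_neg]
  have hterm2 : ∫ t in Ioi 0, ∫ x, fderiv ℝ (fun y => f (t, y)) x q ∂transportSol q e α t =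
      α * ((∫ t in Ioi 0, f (t, φ t)) - ∫ t in Ioi 0, f (t, e)) := by
    have hpush : ∀ t ∈ Ioi (0 : ℝ),
        ∫ x, fderiv ℝ (fun y => f (t, y)) x q ∂transportSol q e α t =
          α * (f (t, φ t) - f (t, e)) := fun t ht =>
      integral_fderiv_transportSol hα (hf.comp (contDiff_const.prodMk contDiff_id)) ht.le
    rw [setIntegral_congr_fun measurableSet_Ioi hpush,
      integral_const_mul, integral_sub (hint φ (by fun_prop)) (hint _ continuous_const)]
  rw [hterm1, hterm2]
  ring

end transportSol

/-- existence part of wellposedness. The family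
`μ_t = α ∫₀^t δ_{e+qs} ds` of finite Borel measures on `ℝ²` satisfies `μ_0 = 0`, is weakly
continuous in `t` on `[0,∞)`, and solves the weak transport equation: for every `C¹`
function `f : ℝ × ℝ² → ℝ` with compact support contained in `(0,∞) × ℝ²`,
`∫₀^∞ ∫ ∂_t f dμ_t dt + ∫₀^∞ ∫ q·∇_x f dμ_t dt + α ∫₀^∞ f(t,e) dt = 0`. -/
theorem transportSol_solves_weak_transport_equation
    (q e : ℝ × ℝ) (α : ℝ) (hα : 0 < α) :
    (∀ t : ℝ, IsFiniteMeasure (transportSol q e α t)) ∧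
    transportSol q e α 0 = 0 ∧
    (∀ g : BoundedContinuousFunction (ℝ × ℝ) ℝ,
      ContinuousOn (fun t : ℝ => ∫ x, g x ∂(transportSol q e α t)) (Set.Ici 0)) ∧
    (∀ f : ℝ × (ℝ × ℝ) → ℝ, ContDiff ℝ 1 f → HasCompactSupport f →
      tsupport f ⊆ Set.Ioi (0 : ℝ) ×ˢ Set.univ →
      (∫ t in Set.Ioi (0 : ℝ), ∫ x, deriv (fun s => f (s, x)) t ∂(transportSol q e α t))
        + (∫ t in Set.Ioi (0 : ℝ), ∫ x, fderiv ℝ (fun y => f (t, y)) x q ∂(transportSol q e α t))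
        + α * ∫ t in Set.Ioi (0 : ℝ), f (t, e) = 0) :=
  ⟨fun _ => inferInstance, transportSol_zero,
    fun g => continuousOn_integral_transportSol hα.le g.continuous,
    fun _ hf hcs _ => weak_transport_equation_transportSol hα.le hf hcs⟩
end

section
/- Uniqueness for the homogeneous transport equation: if (ν_t)_{t≥0} is a family of finite Borel measures on ℝ² such that t ↦ ν_t is continuous in the topology of weak convergence of finite measures, ν_0 = 0, and for every continuously differentiable f : ℝ × ℝ² → ℝ with compact support contained in (0,∞) × ℝ² one has ∫₀^∞ ∫_{ℝ²} ∂_t f(t,x) ν_t(dx) dt + ∫₀^∞ ∫_{ℝ²} q · ∇_x f(t,x) ν_t(dx) dt = 0, then ν_t = 0 for all t ≥ 0. -/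
/-!
For a test function `g` on `ℝ²` and `χ` supported in `(0, ∞)`, put
`f (t, x) = χ t * g (x - t • q)`. Since `g (x - t • q)` is constant along the characteristics
`t ↦ x + t • q`, we get `∂ₜ f + q · ∇ₓ f = χ' t * g (x - t • q)`. The weak equation therefore
says that `G t = ∫ g (x - t • q) dνₜ` has zero distributional derivative on `(0, ∞)`. Weak
continuity of `ν` and uniform continuity of `g` make `G` continuous on `[0, ∞)`, so `G` is
constant, equal to `G 0 = 0`. Since this holds for every smooth compactly supported `g`, every
`νₜ` vanishes.
-/

open MeasureTheory Filter Set Topology BoundedContinuousFunction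
open scoped ContDiff

theorem BoundedContinuousFunction.tendsto_integral_of_tendsto {ι E : Type*} [TopologicalSpace E]
    [MeasurableSpace E] [OpensMeasurableSpace E] {l : Filter ι} {ν : ι → Measure E}
    [∀ i, IsFiniteMeasure (ν i)] {ν₀ : Measure E}
    (hν : ∀ g : E →ᵇ ℝ, Tendsto (fun i => ∫ x, g x ∂ν i) l (𝓝 (∫ x, g x ∂ν₀)))
    {F : ι → E →ᵇ ℝ} {F₀ : E →ᵇ ℝ} (hF : Tendsto F l (𝓝 F₀)) :
    Tendsto (fun i => ∫ x, F i x ∂ν i) l (𝓝 (∫ x, F₀ x ∂ν₀)) := by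
  have hmass : Tendsto (fun i => (ν i).real univ) l (𝓝 (ν₀.real univ)) := by simpa using hν 1
  have hsmall : Tendsto (fun i => ∫ x, (F i - F₀) x ∂ν i) l (𝓝 0) := by
    refine squeeze_zero_norm (fun i => norm_integral_le_of_norm_le_const
      (ae_of_all _ fun x => (F i - F₀).norm_coe_le_norm x)) ?_
    simpa using (tendsto_iff_norm_sub_tendsto_zero.1 hF).mul hmass
  rw [← zero_add (∫ x, F₀ x ∂ν₀)]
  refine (hsmall.add (hν F₀)).congr fun i => ?_
  rw [← integral_add ((F i - F₀).integrable _) (F₀.integrable _)]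
  simp

theorem continuousOn_integral_comp_sub_smul {E : Type*} [NormedAddCommGroup E] [NormedSpace ℝ E]
    [MeasurableSpace E] [OpensMeasurableSpace E] {ν : ℝ → Measure E} [∀ t, IsFiniteMeasure (ν t)]
    {s : Set ℝ} (hν : ∀ g : E →ᵇ ℝ, ContinuousOn (fun t => ∫ x, g x ∂ν t) s) {g : E → ℝ}
    (hg : Continuous g) (hgs : HasCompactSupport g) (q : E) :
    ContinuousOn (fun t => ∫ x, g (x - t • q) ∂ν t) s := by
  obtain ⟨C, hC⟩ := hg.bounded_above_of_compact_support hgs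
  let F : ℝ → E →ᵇ ℝ := fun t =>
    .ofNormedAddCommGroup (fun x => g (x - t • q)) (by fun_prop) C fun x => hC _
  have hF : Continuous F := by
    refine continuous_iff_continuousAt.2 fun t =>
      BoundedContinuousFunction.tendsto_iff_tendstoUniformly.2 ?_
    refine UniformContinuous₂.tendstoUniformly (f := fun t x => g (x - t • q)) ?_
    exact (hgs.uniformContinuous_of_continuous hg).comp
      (uniformContinuous_snd.sub
        (((ContinuousLinearMap.id ℝ ℝ).smulRight q).uniformContinuous.comp uniformContinuous_fst))
  exact fun t ht => tendsto_integral_of_tendsto (fun g => hν g t ht) hF.continuousWithinAt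

theorem MeasureTheory.Measure.eq_zero_of_forall_integral_contDiff_eq_zero {E : Type*}
    [NormedAddCommGroup E] [NormedSpace ℝ E] [FiniteDimensional ℝ E] [MeasurableSpace E]
    [BorelSpace E] {μ : Measure E} [IsLocallyFiniteMeasure μ]
    (h : ∀ g : E → ℝ, ContDiff ℝ ∞ g → HasCompactSupport g → ∫ x, g x ∂μ = 0) : μ = 0 := by
  simpa using ae_eq_zero_of_integral_contDiff_smul_eq_zero (f := fun _ => (1 : ℝ)) (μ := μ)
    (locallyIntegrable_const 1) (by simpa using h)

theorem exists_contDiff_hasCompactSupport_deriv_eq {U : Set ℝ} (hU : U.OrdConnected)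
    {ψ : ℝ → ℝ} (hψ : ContDiff ℝ ∞ ψ) (hψs : HasCompactSupport ψ) (hψU : tsupport ψ ⊆ U)
    (hψ0 : ∫ t, ψ t = 0) :
    ∃ χ : ℝ → ℝ, ContDiff ℝ ∞ χ ∧ HasCompactSupport χ ∧ tsupport χ ⊆ U ∧ deriv χ = ψ := by
  rcases (tsupport ψ).eq_empty_or_nonempty with hempty | hne
  · exact ⟨0, contDiff_const, .zero, by simp, by simp [tsupport_eq_empty_iff.1 hempty]⟩
  set m := sInf (tsupport ψ)
  set M := sSup (tsupport ψ)
  have hK : tsupport ψ ⊆ Icc m M := fun t ht =>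
    ⟨csInf_le hψs.bddBelow ht, le_csSup hψs.bddAbove ht⟩
  let χ : ℝ → ℝ := fun s => ∫ t in (m - 1)..s, ψ t
  have hχd (s : ℝ) : HasDerivAt χ (ψ s) s :=
    (hψ.continuous.integral_hasStrictDerivAt (m - 1) s).hasDerivAt
  have hχψ : deriv χ = ψ := funext fun s => (hχd s).deriv
  have hχK : tsupport χ ⊆ Icc m M := by
    refine closure_minimal (Function.support_subset_iff'.2 fun s hs => ?_) isClosed_Icc
    rcases not_and_or.1 hs with hsm | hsM
    · refine intervalIntegral.integral_zero_ae (ae_of_all _ fun t ht => ?_)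
      refine image_eq_zero_of_notMem_tsupport fun htK => ?_
      exact (ht.2.trans_lt (max_lt (by linarith) (not_le.1 hsm))).not_ge (hK htK).1
    · change ∫ t in (m - 1)..s, ψ t = 0
      rw [intervalIntegral.integral_eq_integral_of_support_subset, hψ0]
      exact (subset_tsupport ψ).trans fun t ht => ⟨by linarith [(hK ht).1], by linarith [(hK ht).2]⟩
  exact ⟨χ, contDiff_infty_iff_deriv.2 ⟨fun s => (hχd s).differentiableAt, hχψ ▸ hψ⟩,
    isCompact_Icc.of_isClosed_subset (isClosed_tsupport χ) hχK,
    hχK.trans (hU.out (hψU (hψs.sInf_mem hne)) (hψU (hψs.sSup_mem hne))), hχψ⟩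

theorem Continuous.integrable_mul_of_tsupport_subset {X : Type*} [TopologicalSpace X]
    [T2Space X] [MeasurableSpace X] [OpensMeasurableSpace X] {μ : Measure X}
    [IsFiniteMeasureOnCompacts μ] {φ G : X → ℝ} {U : Set X} (hφ : Continuous φ)
    (hφs : HasCompactSupport φ) (hφU : tsupport φ ⊆ U) (hG : ContinuousOn G U) :
    Integrable (fun x => φ x * G x) μ :=
  (integrableOn_iff_integrable_of_support_subset
    ((Function.support_mul_subset_left _ _).trans (subset_tsupport φ))).1
    ((hφ.continuousOn.mul (hG.mono hφU)).integrableOn_compact hφs)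

theorem exists_eqOn_const_of_integral_deriv_mul_eq_zero {U : Set ℝ} (hUo : IsOpen U)
    (hU : U.OrdConnected) {G : ℝ → ℝ} (hG : ContinuousOn G U)
    (h : ∀ χ : ℝ → ℝ, ContDiff ℝ ∞ χ → HasCompactSupport χ → tsupport χ ⊆ U →
      ∫ t, deriv χ t * G t = 0) :
    ∃ c, EqOn G (fun _ => c) U := by
  rcases U.eq_empty_or_nonempty with rfl | ⟨t₁, ht₁⟩
  · exact ⟨0, eqOn_empty _ _⟩
  obtain ⟨r, hr, hrU⟩ := Metric.isOpen_iff.1 hUo t₁ ht₁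
  let b : ContDiffBump t₁ := ⟨r / 4, r / 2, by positivity, by linarith⟩
  set φ₀ := b.normed volume
  have hφ₀U : tsupport φ₀ ⊆ U := by
    rw [b.tsupport_normed_eq]
    exact (Metric.closedBall_subset_ball (by linarith : r / 2 < r)).trans hrU
  set c := ∫ t, φ₀ t * G t
  -- `φ - (∫ φ) • φ₀` has integral zero, so it is the derivative of a test function.
  have hint : ∀ φ : ℝ → ℝ, ContDiff ℝ ∞ φ → HasCompactSupport φ → tsupport φ ⊆ U →
      ∫ t, φ t * G t = (∫ t, φ t) * c := by
    intro φ hφ hφs hφU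
    let ψ := fun t => φ t - (∫ t, φ t) * φ₀ t
    have hψ0 : ∫ t, ψ t = 0 := by
      rw [integral_sub (hφ.continuous.integrable_of_hasCompactSupport hφs)
        (b.integrable_normed.const_mul _), integral_const_mul, b.integral_normed, mul_one, sub_self]
    obtain ⟨χ, hχ, hχs, hχU, hχψ⟩ := exists_contDiff_hasCompactSupport_deriv_eq hU
      (hφ.sub (contDiff_const.mul b.contDiff_normed)) (hφs.sub b.hasCompactSupport_normed.mul_left)
      ((tsupport_sub _ _).trans (union_subset hφU ((tsupport_mul_subset_right).trans hφ₀U))) hψ0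
    have := h χ hχ hχs hχU
    simp only [hχψ, sub_mul, mul_assoc] at this
    rwa [integral_sub, integral_const_mul, sub_eq_zero] at this
    · exact hφ.continuous.integrable_mul_of_tsupport_subset hφs hφU hG
    · exact (b.continuous_normed.integrable_mul_of_tsupport_subset b.hasCompactSupport_normed
        hφ₀U hG).const_mul _
  refine ⟨c, Measure.eqOn_open_of_ae_eq (μ := volume) ?_ hUo hG continuousOn_const⟩
  have hzero := hUo.ae_eq_zero_of_integral_contDiff_smul_eq_zero (μ := volume)
    (f := fun t => G t - c)
    ((hG.sub continuousOn_const).locallyIntegrableOn hUo.measurableSet) fun φ hφ hφs hφU => by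
      simp only [smul_eq_mul, mul_sub]
      rw [integral_sub (hφ.continuous.integrable_mul_of_tsupport_subset hφs hφU hG)
        ((hφ.continuous.integrable_of_hasCompactSupport hφs).mul_const c), integral_mul_const,
        hint φ hφ hφs hφU, sub_self]
  exact (ae_restrict_iff' hUo.measurableSet).2 (hzero.mono fun t ht htU => sub_eq_zero.1 (ht htU))

section Transport

variable {E : Type*} [NormedAddCommGroup E] [NormedSpace ℝ E] {χ : ℝ → ℝ} {g : E → ℝ}

theorem HasCompactSupport.mul_comp_sub_smul (hχ : HasCompactSupport χ) (hg : HasCompactSupport g)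
    (q : E) : HasCompactSupport fun p : ℝ × E => χ p.1 * g (p.2 - p.1 • q) := by
  refine .intro ((hχ.prod hg).image
    (by fun_prop : Continuous fun p : ℝ × E => (p.1, p.2 + p.1 • q))) fun p hp => ?_
  by_contra hne
  obtain ⟨h1, h2⟩ := mul_ne_zero_iff.1 hne
  exact hp ⟨(p.1, p.2 - p.1 • q), ⟨subset_tsupport _ h1, subset_tsupport _ h2⟩, by simp⟩

theorem deriv_mul_comp_sub_smul (hχ : Differentiable ℝ χ) (hg : Differentiable ℝ g) (q x : E)
    (t : ℝ) : deriv (fun s => χ s * g (x - s • q)) t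
      = deriv χ t * g (x - t • q) - χ t * fderiv ℝ g (x - t • q) q := by
  have hsub : HasDerivAt (fun s : ℝ => x - s • q) (-q) t := by
    simpa using ((hasDerivAt_id t).smul_const q).const_sub x
  have h : HasDerivAt (fun s => χ s * g (x - s • q))
      (deriv χ t * g (x - t • q) + χ t * fderiv ℝ g (x - t • q) (-q)) t :=
    (hχ t).hasDerivAt.mul ((hg _).hasFDerivAt.comp_hasDerivAt t hsub)
  rw [h.deriv, map_neg, mul_neg, ← sub_eq_add_neg]

theorem fderiv_const_mul_comp_sub (hg : Differentiable ℝ g) (c : ℝ) (v x : E) :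
    fderiv ℝ (fun y => c * g (y - v)) x = c • fderiv ℝ g (x - v) :=
  (((hg _).hasFDerivAt.comp x ((hasFDerivAt_id x).sub_const v)).const_mul c).fderiv

variable [MeasurableSpace E] [OpensMeasurableSpace E] {q : E} {ν : ℝ → Measure E}
  [∀ t, IsFiniteMeasure (ν t)]

theorem integral_deriv_mul_integral_comp_sub_smul_eq_zero
    (hcont : ∀ g : E →ᵇ ℝ, ContinuousOn (fun t => ∫ x, g x ∂ν t) (Ioi 0))
    (hweak : ∀ f : ℝ × E → ℝ, ContDiff ℝ 1 f → HasCompactSupport f →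
      tsupport f ⊆ Ioi (0 : ℝ) ×ˢ univ →
      (∫ t in Ioi (0 : ℝ), ∫ x, deriv (fun s => f (s, x)) t ∂ν t)
        + (∫ t in Ioi (0 : ℝ), ∫ x, fderiv ℝ (fun y => f (t, y)) x q ∂ν t) = 0)
    (hg : ContDiff ℝ 1 g) (hgs : HasCompactSupport g)
    (hχ : ContDiff ℝ 1 χ) (hχs : HasCompactSupport χ) (hχU : tsupport χ ⊆ Ioi 0) :
    ∫ t, deriv χ t * ∫ x, g (x - t • q) ∂ν t = 0 := by
  set G := fun t => ∫ x, g (x - t • q) ∂ν t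
  set H := fun t => ∫ x, fderiv ℝ g (x - t • q) q ∂ν t
  have hDg : Continuous fun y => fderiv ℝ g y q :=
    (hg.continuous_fderiv one_ne_zero).clm_apply continuous_const
  have hDgs : HasCompactSupport fun y => fderiv ℝ g y q := hgs.fderiv_apply (𝕜 := ℝ) q
  have htrans {k : E → ℝ} (hk : Continuous k) (hks : HasCompactSupport k) (t : ℝ) :
      Integrable (fun x => k (x - t • q)) (ν t) :=
    (hk.comp (continuous_sub_right _)).integrable_of_hasCompactSupport
      (hks.comp_homeomorph (Homeomorph.subRight _))
  have hA (t : ℝ) : ∫ x, deriv (fun s => χ s * g (x - s • q)) t ∂ν t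
      = deriv χ t * G t - χ t * H t := by
    simp only [deriv_mul_comp_sub_smul (hχ.differentiable one_ne_zero)
      (hg.differentiable one_ne_zero)]
    rw [integral_sub ((htrans hg.continuous hgs t).const_mul _) ((htrans hDg hDgs t).const_mul _),
      integral_const_mul, integral_const_mul]
  have hB (t : ℝ) : ∫ x, fderiv ℝ (fun y => χ t * g (y - t • q)) x q ∂ν t = χ t * H t := by
    simp only [fderiv_const_mul_comp_sub (hg.differentiable one_ne_zero)]
    exact integral_const_mul _ _
  have hw := hweak (fun p => χ p.1 * g (p.2 - p.1 • q))
    ((hχ.comp contDiff_fst).mul (hg.comp (contDiff_snd.sub (contDiff_fst.smul contDiff_const))))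
    (hχs.mul_comp_sub_smul hgs q)
    ((((isClosed_tsupport χ).prod isClosed_univ).closure_subset_iff.2 fun p hp =>
      ⟨subset_tsupport χ (left_ne_zero_of_mul hp), mem_univ _⟩).trans (prod_mono hχU subset_rfl))
  simp only [hA, hB] at hw
  have iG : Integrable fun t => deriv χ t * G t :=
    (hχ.continuous_deriv le_rfl).integrable_mul_of_tsupport_subset hχs.deriv
      (tsupport_deriv_subset.trans hχU)
      ((continuousOn_integral_comp_sub_smul hcont hg.continuous hgs q))
  have iH : Integrable fun t => χ t * H t :=
    hχ.continuous.integrable_mul_of_tsupport_subset hχs hχU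
      (continuousOn_integral_comp_sub_smul hcont hDg hDgs q)
  rw [integral_sub iG.restrict iH.restrict, sub_add_cancel] at hw
  rwa [setIntegral_eq_integral_of_forall_compl_eq_zero fun t ht => by
    rw [image_eq_zero_of_notMem_tsupport fun h => ht (hχU (tsupport_deriv_subset h)),
      zero_mul]] at hw

end Transport

/-- uniqueness for the homogeneous transport equation. If `(ν_t)_{t≥0}`
is a family of finite Borel measures on `ℝ²`, weakly continuous in `t` on `[0,∞)`, with
`ν_0 = 0`, and such that
`∫₀^∞ ∫ ∂_t f dν_t dt + ∫₀^∞ ∫ q·∇_x f dν_t dt = 0`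
for every `C¹` function `f : ℝ × ℝ² → ℝ` with compact support contained in `(0,∞) × ℝ²`,
then `ν_t = 0` for all `t ≥ 0`. -/
theorem homogeneous_transport_equation_uniqueness
    (q : ℝ × ℝ)
    (ν : ℝ → Measure (ℝ × ℝ)) (hfin : ∀ t, IsFiniteMeasure (ν t))
    (hcont : ∀ g : BoundedContinuousFunction (ℝ × ℝ) ℝ,
      ContinuousOn (fun t : ℝ => ∫ x, g x ∂(ν t)) (Set.Ici 0))
    (hzero : ν 0 = 0)
    (hweak : ∀ f : ℝ × (ℝ × ℝ) → ℝ, ContDiff ℝ 1 f → HasCompactSupport f →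
      tsupport f ⊆ Set.Ioi (0 : ℝ) ×ˢ Set.univ →
      (∫ t in Set.Ioi (0 : ℝ), ∫ x, deriv (fun s => f (s, x)) t ∂(ν t))
        + (∫ t in Set.Ioi (0 : ℝ), ∫ x, fderiv ℝ (fun y => f (t, y)) x q ∂(ν t)) = 0) :
    ∀ t : ℝ, 0 ≤ t → ν t = 0 := by
  have hG : ∀ g : ℝ × ℝ → ℝ, ContDiff ℝ ∞ g → HasCompactSupport g →
      ∀ t : ℝ, 0 ≤ t → ∫ x, g (x - t • q) ∂ν t = 0 := by
    intro g hg hgs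
    have hGc := continuousOn_integral_comp_sub_smul hcont hg.continuous hgs q
    obtain ⟨c, hc⟩ := exists_eqOn_const_of_integral_deriv_mul_eq_zero isOpen_Ioi ordConnected_Ioi
      (hGc.mono Ioi_subset_Ici_self) fun χ hχ hχs hχU =>
        integral_deriv_mul_integral_comp_sub_smul_eq_zero
          (fun g => (hcont g).mono Ioi_subset_Ici_self) hweak (hg.of_le (by simp)) hgs
          (hχ.of_le (by simp)) hχs hχU
    have hc' := hc.of_subset_closure hGc continuousOn_const Ioi_subset_Ici_self (closure_Ioi _).ge
    intro t ht
    exact (hc' ht).trans ((hc' (self_mem_Ici : (0 : ℝ) ∈ Ici 0)).symm.trans (by simp [hzero]))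
  intro t ht
  refine Measure.eq_zero_of_forall_integral_contDiff_eq_zero fun g hg hgs => ?_
  simpa using hG (fun x => g (x + t • q)) (hg.comp (contDiff_id.add contDiff_const))
    (hgs.comp_homeomorph (Homeomorph.addRight _)) t ht
end

section
/- Hydrodynamic limit (integrated form): for every bounded continuous f : ℝ² → ℝ and every t ≥ 0, lim_{h → 0⁺} α h Σ_{m=1}^{⌊t/h⌋} E[f(e + h X_m)] = α ∫₀^t f(e + q s) ds, where X_n = ξ₁ + ⋯ + ξ_n is the nearest-neighbor random walk started at 0 and q = (p₁ − p₃, p₂ − p₄). Equivalently, the measures μ^h_t defined by ∫ f dμ^h_t = α h Σ_{m=1}^{⌊t/h⌋} E f(e + h X_m) converge weakly, as h → 0, to μ_t = α ∫₀^t δ_{e+qs} ds for each fixed t. -/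
/-!
By the strong law of large numbers, almost surely `X_n / n → q`. For a fixed path with
`S_n / n → q`, the Riemann-type sum `h Σ_{m ≤ ⌊t/h⌋} f(e + h S_m)` is the integral over
`[0, ⌊t/h⌋h]` of the step function `s ↦ f(e + h S_{⌈s/h⌉})`, and `h S_{⌈s/h⌉} → s q` for every
`s > 0`; dominated convergence in `s` gives the limit `∫₀^t f(e + s q) ds` path by path, and
dominated convergence in `ω` (the sums are bounded by `C t` when `|f| ≤ C`) passes it through the
expectation.
-/

open MeasureTheory ProbabilityTheory Filter
open scoped ENNReal NNReal

/-- The four nearest-neighbor steps on `ℤ²`: `e₁ = (1,0)`, `e₂ = (0,1)`, `e₃ = (-1,0)`,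
`e₄ = (0,-1)`. -/
def stepDir : Fin 4 → ℤ × ℤ
  | 0 => (1, 0)
  | 1 => (0, 1)
  | 2 => (-1, 0)
  | 3 => (0, -1)

open Topology

section RiemannSums

variable {E F : Type*} [NormedAddCommGroup E] [NormedSpace ℝ E]
  [NormedAddCommGroup F] [NormedSpace ℝ F] [CompleteSpace F]

lemma tendsto_mul_natCeil_div {s : ℝ} (hs : 0 ≤ s) :
    Tendsto (fun h : ℝ => h * ⌈s / h⌉₊) (𝓝[>] 0) (𝓝 s) :=
  ((tendsto_nat_ceil_mul_div_atTop hs).comp tendsto_inv_nhdsGT_zero).congr fun h => by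
    simp [div_eq_mul_inv, mul_comm]

lemma tendsto_natFloor_div_mul {t : ℝ} (ht : 0 ≤ t) :
    Tendsto (fun h : ℝ => ⌊t / h⌋₊ * h) (𝓝[>] 0) (𝓝 t) :=
  ((tendsto_nat_floor_mul_div_atTop ht).comp tendsto_inv_nhdsGT_zero).congr fun h => by
    simp [div_eq_mul_inv]

lemma natFloor_div_mul_le {t h : ℝ} (ht : 0 ≤ t) (hh : 0 < h) : ⌊t / h⌋₊ * h ≤ t :=
  (le_div_iff₀ hh).1 (Nat.floor_le (div_nonneg ht hh.le))

lemma natCeil_div_eq_of_mem_Ioc {h s : ℝ} (hh : 0 < h) {k : ℕ}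
    (hs : s ∈ Set.Ioc (k * h) ((k + 1) * h)) : ⌈s / h⌉₊ = k + 1 := by
  rw [Nat.ceil_eq_iff k.succ_ne_zero, Nat.succ_sub_one, lt_div_iff₀ hh, div_le_iff₀ hh]
  exact_mod_cast hs

lemma tendsto_smul_natCeil_div {S : ℕ → E} {q : E}
    (hS : Tendsto (fun n : ℕ => (n : ℝ)⁻¹ • S n) atTop (𝓝 q)) {s : ℝ} (hs : 0 < s) :
    Tendsto (fun h : ℝ => h • S ⌈s / h⌉₊) (𝓝[>] 0) (𝓝 (s • q)) := by
  have hceil : Tendsto (fun h : ℝ => ⌈s / h⌉₊) (𝓝[>] 0) atTop :=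
    tendsto_nat_ceil_atTop.comp ((tendsto_inv_nhdsGT_zero.const_mul_atTop hs).congr
      fun h => (div_eq_mul_inv s h).symm)
  refine ((tendsto_mul_natCeil_div hs.le).smul (hS.comp hceil)).congr' ?_
  filter_upwards [self_mem_nhdsWithin] with h hh
  have : (⌈s / h⌉₊ : ℝ) ≠ 0 := by
    exact_mod_cast (Nat.ceil_pos.2 (div_pos hs hh)).ne'
  simp [smul_smul, mul_assoc, mul_inv_cancel₀ this]

lemma smul_sum_Icc_eq_intervalIntegral_natCeil_div (g : ℕ → F) {h : ℝ} (hh : 0 < h) (N : ℕ) :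
    h • ∑ m ∈ Finset.Icc 1 N, g m = ∫ s in (0 : ℝ)..N * h, g ⌈s / h⌉₊ := by
  have hle (k : ℕ) : (k : ℝ) * h ≤ (k + 1 : ℕ) * h := by gcongr; simp
  have hpiece (k : ℕ) : Set.EqOn (fun s => g ⌈s / h⌉₊) (fun _ => g (k + 1))
      (Set.Ioc (k * h) ((k + 1 : ℕ) * h)) := fun s hs =>
    congrArg g (natCeil_div_eq_of_mem_Ioc hh (by exact_mod_cast hs))
  have hint (k : ℕ) : IntervalIntegrable (fun s => g ⌈s / h⌉₊) volume (k * h) ((k + 1 : ℕ) * h) :=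
    (intervalIntegrable_iff_integrableOn_Ioc_of_le (hle k)).2 <|
      (integrableOn_const measure_Ioc_lt_top.ne).congr_fun (hpiece k).symm measurableSet_Ioc
  have hpiece_integral (k : ℕ) :
      ∫ s in (k * h : ℝ)..((k + 1 : ℕ) * h), g ⌈s / h⌉₊ = h • g (k + 1) := by
    rw [intervalIntegral.integral_of_le (hle k), setIntegral_congr_fun measurableSet_Ioc (hpiece k),
      setIntegral_const, Real.volume_real_Ioc_of_le (hle k)]
    push_cast
    ring_nf
  rw [← Finset.Ico_succ_right_eq_Icc, Finset.sum_Ico_eq_sum_range, Order.succ_eq_add_one,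
    Nat.add_sub_cancel, Finset.smul_sum]
  have := intervalIntegral.sum_integral_adjacent_intervals (a := fun k : ℕ => k * h) (μ := volume)
    (n := N) fun k _ => hint k
  simp only [Nat.cast_zero, zero_mul] at this
  rw [← this]
  exact Finset.sum_congr rfl fun k _ => by rw [hpiece_integral, add_comm]

lemma norm_smul_sum_Icc_natFloor_div_le {g : ℕ → F} {C : ℝ} (hg : ∀ m, ‖g m‖ ≤ C)
    {t h : ℝ} (ht : 0 ≤ t) (hh : 0 < h) : ‖h • ∑ m ∈ Finset.Icc 1 ⌊t / h⌋₊, g m‖ ≤ C * t := by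
  have hC : 0 ≤ C := (norm_nonneg _).trans (hg 0)
  rw [smul_sum_Icc_eq_intervalIntegral_natCeil_div g hh]
  calc _ ≤ C * |⌊t / h⌋₊ * h - 0| :=
        intervalIntegral.norm_integral_le_of_norm_le_const fun _ _ => hg _
    _ ≤ C * t := by
      rw [sub_zero, abs_of_nonneg (by positivity)]
      exact mul_le_mul_of_nonneg_left (natFloor_div_mul_le ht hh) hC

theorem tendsto_smul_sum_Icc_natFloor_div {f : E → F} (hf : Continuous f) {C : ℝ}
    (hC : ∀ x, ‖f x‖ ≤ C) {S : ℕ → E} {q : E}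
    (hS : Tendsto (fun n : ℕ => (n : ℝ)⁻¹ • S n) atTop (𝓝 q)) (e : E) {t : ℝ} (ht : 0 ≤ t) :
    Tendsto (fun h : ℝ => h • ∑ m ∈ Finset.Icc 1 ⌊t / h⌋₊, f (e + h • S m)) (𝓝[>] 0)
      (𝓝 (∫ s in (0 : ℝ)..t, f (e + s • q))) := by
  set φ : ℝ → ℝ → F := fun h s => f (e + h • S ⌈s / h⌉₊)
  have hφ_meas (h : ℝ) : StronglyMeasurable (φ h) :=
    (StronglyMeasurable.of_discrete (f := fun n : ℕ => f (e + h • S n))).comp_measurable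
      (Nat.measurable_ceil.comp (measurable_id.div_const h))
  have hφ_int (h a b : ℝ) : IntervalIntegrable (φ h) volume a b :=
    (intervalIntegrable_const (c := C)).mono_fun (hφ_meas h).aestronglyMeasurable
      (Eventually.of_forall fun s => (hC _).trans (le_abs_self C))
  have hrepr : ∀ᶠ h in 𝓝[>] (0 : ℝ), (∫ s in (0 : ℝ)..t, φ h s) - ∫ s in ⌊t / h⌋₊ * h..t, φ h s =
      h • ∑ m ∈ Finset.Icc 1 ⌊t / h⌋₊, f (e + h • S m) := by
    filter_upwards [self_mem_nhdsWithin] with h hh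
    rw [← intervalIntegral.integral_add_adjacent_intervals (hφ_int h 0 (⌊t / h⌋₊ * h))
      (hφ_int h _ t), add_sub_cancel_right, smul_sum_Icc_eq_intervalIntegral_natCeil_div _ hh]
  have hmain : Tendsto (fun h => ∫ s in (0 : ℝ)..t, φ h s) (𝓝[>] 0)
      (𝓝 (∫ s in (0 : ℝ)..t, f (e + s • q))) := by
    refine intervalIntegral.tendsto_integral_filter_of_dominated_convergence (fun _ => C)
      (Eventually.of_forall fun h => (hφ_meas h).aestronglyMeasurable)
      (Eventually.of_forall fun h => Eventually.of_forall fun s _ => hC _)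
      intervalIntegrable_const (Eventually.of_forall fun s hs => ?_)
    rw [Set.uIoc_of_le ht] at hs
    exact (hf.tendsto _).comp (tendsto_const_nhds.add (tendsto_smul_natCeil_div hS hs.1))
  have htail : Tendsto (fun h => ∫ s in ⌊t / h⌋₊ * h..t, φ h s) (𝓝[>] 0) (𝓝 0) := by
    have hgap : Tendsto (fun h : ℝ => C * |t - ⌊t / h⌋₊ * h|) (𝓝[>] 0) (𝓝 0) := by
      simpa using (((tendsto_natFloor_div_mul ht).const_sub t).abs).const_mul C
    exact squeeze_zero_norm (fun h => intervalIntegral.norm_integral_le_of_norm_le_const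
      fun s _ => hC _) hgap
  simpa only [sub_zero] using (hmain.sub htail).congr' hrepr

theorem tendsto_smul_sum_Icc_integral_of_ae_tendsto {Ω : Type*} [MeasurableSpace Ω]
    {P : Measure Ω} [IsProbabilityMeasure P] {f : E → F} (hf : Continuous f)
    {C : ℝ} (hC : ∀ x, ‖f x‖ ≤ C) {S : ℕ → Ω → E} (hS_meas : ∀ n, AEStronglyMeasurable (S n) P)
    {q : E} (hS : ∀ᵐ ω ∂P, Tendsto (fun n : ℕ => (n : ℝ)⁻¹ • S n ω) atTop (𝓝 q)) (e : E) {t : ℝ}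
    (ht : 0 ≤ t) :
    Tendsto (fun h : ℝ => h • ∑ m ∈ Finset.Icc 1 ⌊t / h⌋₊, ∫ ω, f (e + h • S m ω) ∂P) (𝓝[>] 0)
      (𝓝 (∫ s in (0 : ℝ)..t, f (e + s • q))) := by
  have hmeas (h : ℝ) (m : ℕ) : AEStronglyMeasurable (fun ω => f (e + h • S m ω)) P :=
    hf.comp_aestronglyMeasurable (aestronglyMeasurable_const.add ((hS_meas m).const_smul h))
  have hswap (h : ℝ) : h • ∑ m ∈ Finset.Icc 1 ⌊t / h⌋₊, ∫ ω, f (e + h • S m ω) ∂P =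
      ∫ ω, h • ∑ m ∈ Finset.Icc 1 ⌊t / h⌋₊, f (e + h • S m ω) ∂P := by
    rw [integral_smul, integral_finsetSum _ fun m _ =>
      .of_bound (hmeas h m) C (ae_of_all _ fun _ => hC _)]
  simp_rw [hswap]
  have hDCT := tendsto_integral_filter_of_dominated_convergence (μ := P) (l := 𝓝[>] 0)
    (fun _ => C * t)
    (Eventually.of_forall fun h => (Finset.aestronglyMeasurable_fun_sum _
      fun m _ => hmeas h m).const_smul h)
    (eventually_mem_nhdsWithin.mono fun h hh => ae_of_all _ fun ω =>
      norm_smul_sum_Icc_natFloor_div_le (fun _ => hC _) ht hh)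
    (integrable_const _)
    (hS.mono fun ω hω => tendsto_smul_sum_Icc_natFloor_div hf hC hω e ht)
  simpa using hDCT

end RiemannSums

lemma map_eq_sum_dirac_of_measure_preimage {Ω α ι : Type*} [MeasurableSpace Ω]
    [MeasurableSpace α] [MeasurableSingletonClass α] [Fintype ι] {P : Measure Ω}
    [IsProbabilityMeasure P] {X : Ω → α} (hX : Measurable X) {v : ι → α}
    (hv : Function.Injective v) {w : ι → ℝ≥0∞} (hw : ∑ i, w i = 1)
    (hlaw : ∀ i, P (X ⁻¹' {v i}) = w i) :
    P.map X = ∑ i, w i • Measure.dirac (v i) := by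
  classical
  have : IsProbabilityMeasure (∑ i, w i • Measure.dirac (v i)) := ⟨by simp [hw]⟩
  have := Measure.isProbabilityMeasure_map (μ := P) hX.aemeasurable
  -- both sides are probability measures, so it suffices to compare them one way
  refine (Measure.eq_of_le_of_isProbabilityMeasure (Measure.le_intro fun s hs _ => ?_)).symm
  have hdisj : Set.PairwiseDisjoint ↑(Finset.univ.filter (v · ∈ s)) fun i => X ⁻¹' {v i} :=
    fun i _ j _ hij => (Set.disjoint_singleton.2 (hv.ne hij)).preimage X
  calc (∑ i, w i • Measure.dirac (v i)) s
      = ∑ i ∈ Finset.univ.filter (v · ∈ s), P (X ⁻¹' {v i}) := by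
        simp [Measure.dirac_apply' _ hs, Set.indicator_apply, Finset.sum_filter, hlaw]
    _ = P (⋃ i ∈ Finset.univ.filter (v · ∈ s), X ⁻¹' {v i}) :=
        (measure_biUnion_finset hdisj fun i _ => hX (measurableSet_singleton _)).symm
    _ ≤ P (X ⁻¹' s) := measure_mono <| Set.iUnion₂_subset fun i hi =>
        Set.preimage_mono (Set.singleton_subset_iff.2 (Finset.mem_filter.1 hi).2)
    _ = P.map X s := (Measure.map_apply hX hs).symm

lemma stepDir_injective : Function.Injective stepDir := by decide

noncomputable def toRealPair : ℤ × ℤ →+ ℝ × ℝ := (Int.castAddHom ℝ).prodMap (Int.castAddHom ℝ)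

noncomputable def stepLaw (p : Fin 4 → ℝ) : Measure (ℤ × ℤ) :=
  ∑ l, ENNReal.ofReal (p l) • Measure.dirac (stepDir l)

lemma integrable_stepLaw {E : Type*} [NormedAddCommGroup E] (g : ℤ × ℤ → E) (p : Fin 4 → ℝ) :
    Integrable g (stepLaw p) :=
  integrable_finsetSum_measure.2 fun _ _ =>
    (integrable_dirac enorm_lt_top).smul_measure ENNReal.ofReal_ne_top

lemma integral_toRealPair_stepLaw {p : Fin 4 → ℝ} (hp : ∀ l, 0 ≤ p l) :
    ∫ z, toRealPair z ∂stepLaw p = (p 0 - p 2, p 1 - p 3) := by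
  rw [stepLaw, integral_finsetSum_measure fun l _ =>
    (integrable_dirac enorm_lt_top).smul_measure ENNReal.ofReal_ne_top]
  simp only [stepDir, toRealPair, AddMonoidHom.coe_prodMap, Int.coe_castAddHom,
    integral_smul_measure, ENNReal.toReal_ofReal (hp _), integral_dirac, Fin.sum_univ_four,
    Prod.map_apply, Int.cast_one, Int.cast_zero, Int.cast_neg, Prod.smul_mk, smul_eq_mul,
    mul_one, mul_zero, mul_neg, Prod.mk_add_mk, Prod.ext_iff]
  constructor <;> ring

theorem ae_tendsto_toRealPair_walk_div {Ω : Type*} [MeasurableSpace Ω] {P : Measure Ω}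
    {p : Fin 4 → ℝ} (hp : ∀ l, 0 ≤ p l) {ξ : ℕ → Ω → ℤ × ℤ} (hmeas : ∀ k, Measurable (ξ k))
    (hindep : Pairwise fun i j => IndepFun (ξ i) (ξ j) P)
    (hlaw : ∀ k, P.map (ξ k) = stepLaw p) :
    ∀ᵐ ω ∂P, Tendsto (fun n : ℕ => (n : ℝ)⁻¹ • toRealPair (∑ k ∈ Finset.range n, ξ k ω)) atTop
      (𝓝 (p 0 - p 2, p 1 - p 3)) := by
  have hcast : Measurable toRealPair := measurable_of_countable _
  have hident (k : ℕ) : IdentDistrib (ξ k) (ξ 0) P P :=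
    ⟨(hmeas k).aemeasurable, (hmeas 0).aemeasurable, by rw [hlaw, hlaw]⟩
  have hint : Integrable (toRealPair ∘ ξ 0) P := by
    rw [← integrable_map_measure hcast.aestronglyMeasurable (hmeas 0).aemeasurable, hlaw]
    exact integrable_stepLaw _ p
  have hmean : ∫ ω, toRealPair (ξ 0 ω) ∂P = (p 0 - p 2, p 1 - p 3) := by
    rw [← integral_map (hmeas 0).aemeasurable hcast.aestronglyMeasurable, hlaw,
      integral_toRealPair_stepLaw hp]
  have := strong_law_ae (fun k => toRealPair ∘ ξ k) hint
    (fun i j hij => (hindep hij).comp hcast hcast) fun k => (hident k).comp hcast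
  simpa [hmean] using this

theorem hydrodynamic_limit_integrated_general
    {Ω : Type*} [MeasurableSpace Ω] (P : Measure Ω) [IsProbabilityMeasure P]
    (p : Fin 4 → ℝ) (hp : ∀ l, 0 < p l) (hsum : ∑ l, p l = 1)
    (ξ : ℕ → Ω → ℤ × ℤ) (hmeas : ∀ k, Measurable (ξ k))
    (hindep : iIndepFun ξ P)
    (hlaw : ∀ k l, P {ω | ξ k ω = stepDir l} = ENNReal.ofReal (p l))
    (e : ℝ × ℝ) (α : ℝ)
    (q : ℝ × ℝ) (hq : q = (p 0 - p 2, p 1 - p 3))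
    (f : ℝ × ℝ → ℝ) (hf : Continuous f) (hfb : ∃ C : ℝ, ∀ x, |f x| ≤ C)
    (t : ℝ) (ht : 0 ≤ t) :
    Tendsto
      (fun h : ℝ => α * h *
        ∑ m ∈ Finset.Icc 1 (Nat.floor (t / h)),
          ∫ ω, f (e + h •
            ((((∑ k ∈ Finset.range m, ξ k ω).1 : ℝ),
              ((∑ k ∈ Finset.range m, ξ k ω).2 : ℝ)) : ℝ × ℝ)) ∂P)
      (nhdsWithin 0 (Set.Ioi 0))
      (nhds (α * ∫ s in (0 : ℝ)..t, f (e + s • q))) := by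
  obtain ⟨C, hC⟩ := hfb
  have hlaw_map (k : ℕ) : P.map (ξ k) = stepLaw p :=
    map_eq_sum_dirac_of_measure_preimage (hmeas k) stepDir_injective
      (by rw [← ENNReal.ofReal_sum_of_nonneg fun l _ => (hp l).le, hsum, ENNReal.ofReal_one])
      (hlaw k)
  have hslln := ae_tendsto_toRealPair_walk_div (fun l => (hp l).le) hmeas
    (fun _ _ hij => hindep.indepFun hij) hlaw_map
  rw [← hq] at hslln
  have hwalk_meas (n : ℕ) : Measurable fun ω => toRealPair (∑ k ∈ Finset.range n, ξ k ω) :=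
    (measurable_of_countable _).comp (Finset.measurable_sum _ fun k _ => hmeas k)
  refine ((tendsto_smul_sum_Icc_integral_of_ae_tendsto hf (fun x => (hC x : ‖f x‖ ≤ C))
    (fun n => (hwalk_meas n).aestronglyMeasurable) hslln e ht).const_mul α).congr fun h => ?_
  simp only [smul_eq_mul, mul_assoc]
  rfl

/-- hydrodynamic limit, integrated form. For every bounded continuous
`f : ℝ² → ℝ` and every `t ≥ 0`,
`lim_{h→0⁺} α h Σ_{m=1}^{⌊t/h⌋} E[f(e + h X_m)] = α ∫₀^t f(e + q s) ds`,
where `X_n = ξ₁ + ⋯ + ξ_n` is the walk started at `0` and `q = (p₁−p₃, p₂−p₄)`. -/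
theorem hydrodynamic_limit_integrated
    {Ω : Type*} [MeasurableSpace Ω] (P : Measure Ω) [IsProbabilityMeasure P]
    (p : Fin 4 → ℝ) (hp : ∀ l, 0 < p l) (hsum : ∑ l, p l = 1)
    (ξ : ℕ → Ω → ℤ × ℤ) (hmeas : ∀ k, Measurable (ξ k))
    (hindep : iIndepFun ξ P)
    (hlaw : ∀ k l, P {ω | ξ k ω = stepDir l} = ENNReal.ofReal (p l))
    (e : ℝ × ℝ) (α : ℝ) (hα : 0 < α)
    (q : ℝ × ℝ) (hq : q = (p 0 - p 2, p 1 - p 3))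
    (f : ℝ × ℝ → ℝ) (hf : Continuous f) (hfb : ∃ C : ℝ, ∀ x, |f x| ≤ C)
    (t : ℝ) (ht : 0 ≤ t) :
    Tendsto
      (fun h : ℝ => α * h *
        ∑ m ∈ Finset.Icc 1 (Nat.floor (t / h)),
          ∫ ω, f (e + h •
            ((((∑ k ∈ Finset.range m, ξ k ω).1 : ℝ),
              ((∑ k ∈ Finset.range m, ξ k ω).2 : ℝ)) : ℝ × ℝ)) ∂P)
      (nhdsWithin 0 (Set.Ioi 0))
      (nhds (α * ∫ s in (0 : ℝ)..t, f (e + s • q))) :=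
  hydrodynamic_limit_integrated_general P p hp hsum ξ hmeas hindep hlaw e α q hq f hf hfb t ht
end
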